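/- arXiv:1004.1888 — 10 statements merged into one kernel-verified Lean document; each statement's English description precedes it below -/
import Mathlib

section
/- Let I > 0 and let z ∈ ℂ³ satisfy 2 z_j |z|² + conj(z_j) (z₁² + z₂² + z₃²) = z_j / I for all j = 1,2,3, with z ≠ 0. Then either |z|² = 1/(2I) and z₁² + z₂² + z₃² = 0, or |z|² = 1/(3I) and there exists α ∈ ℝ such that e^{iα} z ∈ ℝ³. -/
/-- Classification of solutions of the leading-order bifurcation equation
`2 z_j |z|² + conj(z_j) z² = z_j / I` for the cubic NLS with a degenerate
excited eigenvalue. -/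
theorem stmt0 (I : ℝ) (hI : 0 < I) (z : Fin 3 → ℂ) (hz : z ≠ 0)
    (h : ∀ j, 2 * z j * ((∑ i, ‖z i‖ ^ 2 : ℝ) : ℂ)
        + (starRingEnd ℂ) (z j) * (∑ i, (z i) ^ 2) = z j / (I : ℂ)) :
    ((∑ i, ‖z i‖ ^ 2) = 1 / (2 * I) ∧ (∑ i, (z i) ^ 2) = 0) ∨
    ((∑ i, ‖z i‖ ^ 2) = 1 / (3 * I) ∧
      ∃ α : ℝ, ∀ j, (Complex.exp (α * Complex.I) * z j).im = 0) := by
  set N : ℝ := ∑ i, ‖z i‖ ^ 2 with hNdef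
  set S : ℂ := ∑ i, (z i) ^ 2 with hSdef
  have hIne : (I : ℂ) ≠ 0 := by exact_mod_cast hI.ne'
  obtain ⟨j0, hj0⟩ := Function.ne_iff.mp hz
  have hj0' : z j0 ≠ 0 := by simpa using hj0
  have hN0 : 0 < N := by
    have h1 : 0 < ‖z j0‖ ^ 2 := pow_pos (norm_pos_iff.mpr hj0') 2
    exact Finset.sum_pos' (fun i _ => sq_nonneg _) ⟨j0, Finset.mem_univ j0, h1⟩
  have hNne : ((N : ℝ) : ℂ) ≠ 0 := by exact_mod_cast hN0.ne'
  have hNc : (∑ i, (starRingEnd ℂ) (z i) * z i) = ((N : ℝ) : ℂ) := by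
    rw [hNdef]
    push_cast
    refine Finset.sum_congr rfl fun i _ => ?_
    rw [mul_comm, Complex.mul_conj, ← Complex.sq_norm]
    push_cast
    ring
  have e2 : 3 * ((N : ℝ) : ℂ) * S = S / I := by
    have hsum : ∑ j, z j * (2 * z j * ((N : ℝ) : ℂ) + (starRingEnd ℂ) (z j) * S)
        = ∑ j, z j * (z j / I) := Finset.sum_congr rfl fun j _ => by rw [h j]
    have a1 : ∑ j, z j * (2 * z j * ((N : ℝ) : ℂ) + (starRingEnd ℂ) (z j) * S)
        = 2 * ((N : ℝ) : ℂ) * S + (∑ i, (starRingEnd ℂ) (z i) * z i) * S := by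
      rw [hSdef, Finset.mul_sum, Finset.sum_mul, ← Finset.sum_add_distrib]
      exact Finset.sum_congr rfl fun j _ => by ring
    have a2 : ∑ j, z j * (z j / I) = S / I := by
      rw [hSdef, Finset.sum_div]
      exact Finset.sum_congr rfl fun j _ => by ring
    rw [a1, a2, hNc] at hsum
    linear_combination hsum
  by_cases hS : S = 0
  · left
    refine ⟨?_, hS⟩
    have hj := h j0
    rw [hS, mul_zero, add_zero] at hj
    have h2 : (2 * ((N : ℝ) : ℂ)) * z j0 = (1 / I) * z j0 := by
      linear_combination hj
    have h2' : (2 * ((N : ℝ) : ℂ)) = 1 / I := mul_right_cancel₀ hj0' h2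
    have : ((N : ℝ) : ℂ) = ((1 / (2 * I) : ℝ) : ℂ) := by
      push_cast
      field_simp at h2' ⊢
      linear_combination h2'
    exact_mod_cast this
  · right
    have h3 : (3 * ((N : ℝ) : ℂ)) = 1 / I := by
      have hh : (3 * ((N : ℝ) : ℂ) - 1 / I) * S = 0 := by linear_combination e2
      rcases mul_eq_zero.mp hh with h' | h'
      · exact sub_eq_zero.mp h'
      · exact absurd h' hS
    have hNval : N = 1 / (3 * I) := by
      have : ((N : ℝ) : ℂ) = ((1 / (3 * I) : ℝ) : ℂ) := by
        push_cast
        field_simp at h3 ⊢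
        linear_combination h3
      exact_mod_cast this
    refine ⟨hNval, ?_⟩
    have hkey : ∀ j, (starRingEnd ℂ) (z j) * S = z j * N := fun j => by
      linear_combination h j - z j * h3
    have habsS : ‖S‖ = N := by
      have hk := congrArg norm (hkey j0)
      rw [norm_mul, norm_mul, Complex.norm_conj, Complex.norm_real, Real.norm_eq_abs, abs_of_pos hN0] at hk
      exact mul_left_cancel₀ (norm_ne_zero_iff.mpr hj0') hk
    set c : ℂ := S / ((N : ℝ) : ℂ) with hcdef
    have hcabs : ‖c‖ = 1 := by
      rw [hcdef, norm_div, habsS, Complex.norm_real, Real.norm_eq_abs, abs_of_pos hN0, div_self hN0.ne']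
    have key : ∀ j, z j = (starRingEnd ℂ) (z j) * c := fun j => by
      rw [hcdef]
      field_simp
      linear_combination -hkey j
    have hcexp : Complex.exp ((Complex.arg c : ℂ) * Complex.I) = c := by
      have := Complex.norm_mul_exp_arg_mul_I c
      rwa [hcabs, Complex.ofReal_one, one_mul] at this
    set α : ℝ := -(Complex.arg c) / 2 with hαdef
    set u : ℂ := Complex.exp ((α : ℂ) * Complex.I) with hudef
    have hconju : (starRingEnd ℂ) u = u * c := by
      rw [hudef, ← Complex.exp_conj, ← hcexp, ← Complex.exp_add]
      congr 1
      rw [map_mul, Complex.conj_ofReal, Complex.conj_I]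
      rw [hαdef]
      push_cast
      ring
    refine ⟨α, fun j => ?_⟩
    rw [← Complex.conj_eq_iff_im, map_mul, hconju]
    conv_rhs => rw [key j]
    ring
end

section
/- Let z ∈ ℂ³ be nonzero and suppose that for some index j₀, z_{j₀} is a nonzero real number, and that for every j with z_j ≠ 0 one has 2|z|² + e^{-2iα_j}(z₁²+z₂²+z₃²) = 1/I where z_j = |z_j| e^{iα_j}. Then for every j, either z_j is real (possibly up to sign ±|z_j|) or z₁²+z₂²+z₃² = 0. -/
/-- If `Real.cos (2α) = 1` then `Real.sin α = 0`. -/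
lemma sin_eq_zero_of_cos_two_mul_eq_one (α : ℝ) (h : Real.cos (2 * α) = 1) :
    Real.sin α = 0 := by
  have h2 : Real.sin α ^ 2 = 0 := by
    have := Real.cos_two_mul α
    have hc := Real.cos_sq' α
    nlinarith [this, hc]
  exact pow_eq_zero_iff (n := 2) (by norm_num) |>.mp h2

/-- If some component `z j₀` is a nonzero real number, and for every `j` with
`z j ≠ 0` (writing `z j = |z j| e^{i α_j}`) one has
`2|z|² + e^{-2iα_j} z² = 1/I`, then each component is real or `z² = 0`. -/
theorem stmt1 (I : ℝ) (hI : 0 < I) (z : Fin 3 → ℂ) (hz : z ≠ 0)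
    (j₀ : Fin 3) (hj₀ : z j₀ ≠ 0) (hj₀re : (z j₀).im = 0)
    (h : ∀ j, z j ≠ 0 → ∀ α : ℝ,
        z j = (‖z j‖ : ℂ) * Complex.exp (α * Complex.I) →
        2 * ((∑ i, ‖z i‖ ^ 2 : ℝ) : ℂ)
          + Complex.exp (-(2 * α) * Complex.I) * (∑ i, (z i) ^ 2) = 1 / (I : ℂ)) :
    ∀ j, (z j).im = 0 ∨ (∑ i, (z i) ^ 2) = 0 := by
  intro j
  by_cases hzj : z j = 0
  · left; simp [hzj]
  by_cases hQ : (∑ i, (z i) ^ 2) = 0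
  · right; exact hQ
  left
  -- the equation for j₀
  have h₀ := h j₀ hj₀ (z j₀).arg (Complex.norm_mul_exp_arg_mul_I (z j₀)).symm
  have hj := h j hzj (z j).arg (Complex.norm_mul_exp_arg_mul_I (z j)).symm
  -- sin (arg (z j₀)) = 0
  have hsin0 : Real.sin (z j₀).arg = 0 := by
    rw [Complex.sin_arg, hj₀re, zero_div]
  -- hence exp (-(2 arg₀) I) = 1
  have hexp0 : Complex.exp (-(2 * ((z j₀).arg : ℂ)) * Complex.I) = 1 := by
    have : (-(2 * ((z j₀).arg : ℂ))) = ((-(2 * (z j₀).arg) : ℝ) : ℂ) := by push_cast; ring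
    rw [this]
    apply Complex.ext
    · rw [Complex.exp_ofReal_mul_I_re, Complex.one_re, Real.cos_neg, Real.cos_two_mul,
        Real.cos_sq', hsin0]
      ring
    · rw [Complex.exp_ofReal_mul_I_im, Complex.one_im, Real.sin_neg, Real.sin_two_mul, hsin0]
      ring
  rw [hexp0, one_mul] at h₀
  -- compare the two equations
  have heq : Complex.exp (-(2 * ((z j).arg : ℂ)) * Complex.I) * (∑ i, (z i) ^ 2)
      = ∑ i, (z i) ^ 2 := by
    have := hj.trans h₀.symm
    linear_combination this
  have hexpj : Complex.exp (-(2 * ((z j).arg : ℂ)) * Complex.I) = 1 := by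
    have hz0 : (Complex.exp (-(2 * ((z j).arg : ℂ)) * Complex.I) - 1) * (∑ i, (z i) ^ 2) = 0 := by
      linear_combination heq
    rcases mul_eq_zero.mp hz0 with h1 | h2
    · exact sub_eq_zero.mp h1
    · exact absurd h2 hQ
  -- extract cos (2 arg_j) = 1
  have hcos : Real.cos (2 * (z j).arg) = 1 := by
    have hcast : (-(2 * ((z j).arg : ℂ))) = ((-(2 * (z j).arg) : ℝ) : ℂ) := by push_cast; ring
    rw [hcast] at hexpj
    have := congrArg Complex.re hexpj
    rwa [Complex.exp_ofReal_mul_I_re, Complex.one_re, Real.cos_neg] at this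
  have hsinj : Real.sin (z j).arg = 0 := sin_eq_zero_of_cos_two_mul_eq_one _ hcos
  have := Complex.norm_mul_sin_arg (z j)
  rw [hsinj, mul_zero] at this
  exact this.symm
end

section
/- Every nonzero z ∈ ℂ³ with z₁²+z₂²+z₃² = 0 and |z|² = 1/(2I) lies in the orbit of (1/4I)^{1/2}(1, i, 0) under the group generated by real orthogonal transformations of ℂ³ (acting componentwise via a matrix in O(3)), multiplication by unit complex scalars, and componentwise complex conjugation. -/
open Matrix

/-- Auxiliary: a matrix whose rows form an orthonormal system satisfies `M * Mᵀ = 1`. -/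
lemma gram_rows_aux (u v w : Fin 3 → ℝ)
    (huu : u ⬝ᵥ u = 1) (hvv : v ⬝ᵥ v = 1) (hww : w ⬝ᵥ w = 1)
    (huv : u ⬝ᵥ v = 0) (hvu : v ⬝ᵥ u = 0) (huw : u ⬝ᵥ w = 0)
    (hwu : w ⬝ᵥ u = 0) (hvw : v ⬝ᵥ w = 0) (hwv : w ⬝ᵥ v = 0) :
    (Matrix.of ![u, v, w]) * (Matrix.of ![u, v, w])ᵀ = 1 := by
  set M : Matrix (Fin 3) (Fin 3) ℝ := Matrix.of ![u, v, w] with hMdef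
  have hdot : ∀ a b : Fin 3, (M * Mᵀ) a b = M a ⬝ᵥ M b := fun a b => rfl
  ext a b
  rw [hdot]
  fin_cases a <;> fin_cases b <;>
    simp only [hMdef, Matrix.of_apply, Fin.zero_eta, Fin.mk_one, Fin.isValue,
      Matrix.cons_val_zero, Matrix.cons_val_one, Matrix.head_cons,
      show (⟨2, by omega⟩ : Fin 3) = 2 from rfl, Matrix.cons_val_two, Matrix.tail_cons,
      Matrix.one_apply, Fin.reduceEq, if_true, if_false] <;>
    simp_all only [dotProduct, Fin.sum_univ_three, Matrix.of_apply, Matrix.cons_val_zero,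
      Matrix.cons_val_one, Matrix.head_cons, Matrix.cons_val_two, Matrix.tail_cons]

/-- The bifurcation direction `v₂ = (1/4I)^{1/2} (1, i, 0)`. -/
noncomputable def v2vec (I : ℝ) : Fin 3 → ℂ :=
  fun j => (Real.sqrt (1 / (4 * I)) : ℂ) * ![1, Complex.I, 0] j

/-- Every nonzero `z ∈ ℂ³` with `z² = 0` and `|z|² = 1/(2I)` lies in the orbit
of `(1/4I)^{1/2}(1, i, 0)` under the group generated by `O(3)` (acting
componentwise through a real orthogonal matrix), unit complex scalars, and
componentwise complex conjugation. -/
theorem stmt3 (I : ℝ) (hI : 0 < I) (z : Fin 3 → ℂ) (hz : z ≠ 0)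
    (hnull : (∑ i, (z i) ^ 2) = 0)
    (hnorm : (∑ i, ‖z i‖ ^ 2) = 1 / (2 * I)) :
    ∃ A : Matrix (Fin 3) (Fin 3) ℝ, A ∈ Matrix.orthogonalGroup (Fin 3) ℝ ∧
      ∃ c : ℂ, ‖c‖ = 1 ∧
        (z = (fun j => c * ((A.map (Complex.ofReal)).mulVec (v2vec I)) j) ∨
         z = (fun j => c * (starRingEnd ℂ) (((A.map (Complex.ofReal)).mulVec (v2vec I)) j))) := by
  classical
  set x : Fin 3 → ℝ := fun j => (z j).re with hxdef
  set y : Fin 3 → ℝ := fun j => (z j).im with hydef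
  have hre : (x 0)^2 - (y 0)^2 + ((x 1)^2 - (y 1)^2) + ((x 2)^2 - (y 2)^2) = 0 := by
    have := congrArg Complex.re hnull
    simpa [Fin.sum_univ_three, Complex.add_re, pow_two, Complex.mul_re, hxdef, hydef,
      sub_eq_add_neg] using this
  have him : x 0 * y 0 + x 1 * y 1 + x 2 * y 2 = 0 := by
    have := congrArg Complex.im hnull
    simp [Fin.sum_univ_three, pow_two, Complex.mul_im, hxdef, hydef] at this
    linarith
  have habs : (x 0)^2 + (y 0)^2 + ((x 1)^2 + (y 1)^2) + ((x 2)^2 + (y 2)^2) = 1/(2*I) := by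
    have h : ∀ i, ‖z i‖ ^ 2 = (x i)^2 + (y i)^2 := by
      intro i
      rw [Complex.sq_norm, Complex.normSq_apply]; ring
    rw [Fin.sum_univ_three, h 0, h 1, h 2] at hnorm
    linarith
  have hhalf : 1/(2*I) = 1/(4*I) + 1/(4*I) := by
    field_simp; ring
  set r : ℝ := Real.sqrt (1/(4*I)) with hrdef
  have hrpos : 0 < r := Real.sqrt_pos.mpr (by positivity)
  have hr2 : r^2 = 1/(4*I) := Real.sq_sqrt (by positivity)
  have hxx : x ⬝ᵥ x = r^2 := by
    simp only [dotProduct, Fin.sum_univ_three, hr2]; nlinarith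
  have hyy : y ⬝ᵥ y = r^2 := by
    simp only [dotProduct, Fin.sum_univ_three, hr2]; nlinarith
  have hxy : x ⬝ᵥ y = 0 := by
    simp only [dotProduct, Fin.sum_univ_three]; linarith
  set u : Fin 3 → ℝ := r⁻¹ • x with hudef
  set v : Fin 3 → ℝ := r⁻¹ • y with hvdef
  set w : Fin 3 → ℝ := crossProduct u v with hwdef
  have hrne : r ≠ 0 := ne_of_gt hrpos
  have hir : r⁻¹ * r⁻¹ * r^2 = 1 := by field_simp [pow_two]
  have huu : u ⬝ᵥ u = 1 := by
    rw [hudef, smul_dotProduct, dotProduct_smul, hxx, smul_eq_mul, smul_eq_mul, ← mul_assoc, hir]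
  have hvv : v ⬝ᵥ v = 1 := by
    rw [hvdef, smul_dotProduct, dotProduct_smul, hyy, smul_eq_mul, smul_eq_mul, ← mul_assoc, hir]
  have huv : u ⬝ᵥ v = 0 := by
    rw [hudef, hvdef, smul_dotProduct, dotProduct_smul, hxy]; simp
  have hvu : v ⬝ᵥ u = 0 := by rwa [dotProduct_comm] at huv
  have hwu : w ⬝ᵥ u = 0 := by
    rw [dotProduct_comm, hwdef]; exact dot_self_cross u v
  have hwv : w ⬝ᵥ v = 0 := by
    rw [dotProduct_comm, hwdef]; exact dot_cross_self u v
  have huw : u ⬝ᵥ w = 0 := by rwa [dotProduct_comm] at hwu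
  have hvw : v ⬝ᵥ w = 0 := by rwa [dotProduct_comm] at hwv
  have hww : w ⬝ᵥ w = 1 := by
    rw [hwdef, cross_dot_cross, huu, hvv, huv, hvu]; ring
  set M : Matrix (Fin 3) (Fin 3) ℝ := Matrix.of ![u, v, w] with hMdef
  have hM0 : ∀ k, M 0 k = u k := fun _ => rfl
  have hM1 : ∀ k, M 1 k = v k := fun _ => rfl
  have hM2 : ∀ k, M 2 k = w k := fun _ => rfl
  refine ⟨Mᵀ, ?_, 1, by simp, Or.inl ?_⟩
  · rw [Matrix.mem_orthogonalGroup_iff']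
    have hstar : star Mᵀ = M := by
      ext i j
      simp [Matrix.star_apply]
    rw [Matrix.transpose_transpose]
    exact gram_rows_aux u v w huu hvv hww huv hvu huw hwu hvw hwv
  · funext j
    have hv2 : ∀ k, v2vec I k = (r : ℂ) * ![1, Complex.I, 0] k := fun k => rfl
    have hmv : (Mᵀ.map (Complex.ofReal)).mulVec (v2vec I) j
        = (u j : ℂ) * r + (v j : ℂ) * (r * Complex.I) := by
      simp only [Matrix.mulVec, dotProduct, Fin.sum_univ_three, Matrix.map_apply,
        Matrix.transpose_apply, hM0, hM1, hM2, hv2, Matrix.cons_val_zero,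
        Matrix.cons_val_one, Matrix.head_cons]
      simp
    rw [hmv]
    have hru : r * u j = x j := by
      rw [hudef]; simp only [Pi.smul_apply, smul_eq_mul]; field_simp
    have hrv : r * v j = y j := by
      rw [hvdef]; simp only [Pi.smul_apply, smul_eq_mul]; field_simp
    have : ((u j : ℂ) * r + (v j : ℂ) * (r * Complex.I)) = (x j : ℂ) + (y j : ℂ) * Complex.I := by
      rw [← hru, ← hrv]; push_cast; ring
    rw [one_mul, this]
    exact (Complex.re_add_im (z j)).symm
end

section
/- Every nonzero z ∈ ℂ³ with |z|² = 1/(3I) and e^{iα} z ∈ ℝ³ for some α ∈ ℝ lies in the orbit of (1/3I)^{1/2}(1, 0, 0) under the group generated by O(3) acting componentwise, unit complex scalar multiplication, and componentwise complex conjugation. -/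
/-- The bifurcation direction `v₁ = (1/3I)^{1/2} (1, 0, 0)`. -/
noncomputable def v1vec (I : ℝ) : Fin 3 → ℂ :=
  fun j => (Real.sqrt (1 / (3 * I)) : ℂ) * ![1, 0, 0] j

/-- Every nonzero `z ∈ ℂ³` with `|z|² = 1/(3I)` and `e^{iα} z ∈ ℝ³` for some
`α ∈ ℝ` lies in the orbit of `(1/3I)^{1/2}(1, 0, 0)` under the group generated
by `O(3)` acting componentwise, unit complex scalar multiplication, and
componentwise complex conjugation. -/
theorem stmt4 (I : ℝ) (hI : 0 < I) (z : Fin 3 → ℂ) (hz : z ≠ 0)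
    (hnorm : (∑ i, ‖z i‖ ^ 2) = 1 / (3 * I))
    (hreal : ∃ α : ℝ, ∀ j, (Complex.exp ((α : ℂ) * Complex.I) * z j).im = 0) :
    ∃ A : Matrix (Fin 3) (Fin 3) ℝ, A ∈ Matrix.orthogonalGroup (Fin 3) ℝ ∧
      ∃ c : ℂ, ‖c‖ = 1 ∧
        (z = (fun j => c * ((A.map (Complex.ofReal)).mulVec (v1vec I)) j) ∨
         z = (fun j => c * (starRingEnd ℂ) (((A.map (Complex.ofReal)).mulVec (v1vec I)) j))) := by
  obtain ⟨α, hα⟩ := hreal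
  have h3I : (0:ℝ) < 1 / (3 * I) := by positivity
  obtain ⟨r, hr_def⟩ : ∃ r : ℝ, r = Real.sqrt (1 / (3 * I)) := ⟨_, rfl⟩
  have hr : 0 < r := hr_def ▸ Real.sqrt_pos.mpr h3I
  have hr2 : r ^ 2 = 1 / (3 * I) := hr_def ▸ Real.sq_sqrt h3I.le
  set x : Fin 3 → ℝ := fun j => (Complex.exp ((α : ℂ) * Complex.I) * z j).re with hx_def
  have hzx : ∀ j, z j = Complex.exp (-(α : ℂ) * Complex.I) * (x j : ℂ) := by
    intro j
    have h1 : (x j : ℂ) = Complex.exp ((α : ℂ) * Complex.I) * z j := by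
      apply Complex.ext
      · rfl
      · simpa using (hα j).symm
    rw [h1, ← mul_assoc, ← Complex.exp_add]
    ring_nf
    simp
  have hxnorm : ∑ j, x j ^ 2 = 1 / (3 * I) := by
    rw [← hnorm]
    refine Finset.sum_congr rfl fun j _ => ?_
    have : ‖z j‖ = |x j| := by
      rw [hzx j]
      simp [Complex.norm_exp, abs_mul]
    rw [this, sq_abs]
  set u : EuclideanSpace ℝ (Fin 3) := WithLp.toLp 2 (fun j => r⁻¹ * x j) with hu_def
  have hON : Orthonormal ℝ (Set.restrict ({0} : Set (Fin 3)) (fun _ => u)) := by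
    rw [orthonormal_iff_ite]
    intro i j
    rcases i with ⟨i, hi⟩; rcases j with ⟨j, hj⟩
    simp only [Set.mem_singleton_iff] at hi hj
    subst hi; subst hj
    simp only [Set.restrict_apply, if_pos rfl, PiLp.inner_apply, RCLike.inner_apply,
      starRingEnd_apply, star_trivial]
    have : ∑ i, u i * u i = r⁻¹ ^ 2 * ∑ i, x i ^ 2 := by
      rw [Finset.mul_sum]
      exact Finset.sum_congr rfl fun i _ => by simp only [hu_def, PiLp.toLp_apply]; ring
    change ∑ i, u.ofLp i * u.ofLp i = (1:ℝ)
    rw [this, hxnorm, ← hr2]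
    field_simp
  obtain ⟨b, hb⟩ := hON.exists_orthonormalBasis_extension_of_card_eq (by simp)
  have hb0 : b 0 = u := hb 0 rfl
  refine ⟨Matrix.of fun i j => b j i, ?_, Complex.exp (-(α : ℂ) * Complex.I), ?_, Or.inl ?_⟩
  · rw [Matrix.mem_orthogonalGroup_iff']
    ext j k
    simp only [Matrix.mul_apply, Matrix.star_apply, Matrix.transpose_apply, Matrix.of_apply,
      star_trivial, Matrix.one_apply]
    have := (orthonormal_iff_ite.mp b.orthonormal) j k
    rw [PiLp.inner_apply] at this
    simpa [RCLike.inner_apply, mul_comm] using this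
  · have : -(α : ℂ) * Complex.I = ((-α : ℝ) : ℂ) * Complex.I := by push_cast; ring
    rw [this]
    simp [Complex.norm_exp]
  · funext j
    have hmv : ((Matrix.of fun i j => b j i).map Complex.ofReal).mulVec (v1vec I) j = (x j : ℂ) := by
      simp only [Matrix.mulVec, dotProduct, Matrix.map_apply, Matrix.of_apply, v1vec,
        ← hr_def]
      rw [Fin.sum_univ_three]
      simp only [Matrix.cons_val_zero, Matrix.cons_val_one, Matrix.head_cons, Matrix.cons_val_two,
        Matrix.tail_cons, mul_one, mul_zero, add_zero]
      rw [hb0]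
      simp only [hu_def, PiLp.toLp_apply]
      push_cast
      field_simp
      exact mul_div_cancel_left₀ _ (by exact_mod_cast hr.ne')
    rw [hmv, ← hzx j]
end

section
/- Let G₂ be the subgroup of O(3) ⊕ O(2) generated by the elements ι₁ = (diag(1,-1,1), conj), ι₂ = (diag(1,1,-1), 1), and g(α) = (R₁₂(α), e^{-iα}) for all α ∈ [0,2π), where R₁₂(α) is rotation by α in the x₁x₂-plane. Then the fixed subspace of ℂ³ under the induced action of G₂ is the real span of the vector (1, i, 0). -/
/-- The fixed subspace of `ℂ³` under (the subgroup of `O(3) ⊕ O(2)` generated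
by) `ι₁ = (diag(1,-1,1), conj)`, `ι₂ = (diag(1,1,-1), 1)` and
`g(α) = (R₁₂(α), e^{-iα})` is the real span of `(1, i, 0)`.  Since the fixed
set of a set of generators coincides with the fixed set of the generated
subgroup, fixedness is expressed through the generators. -/
theorem stmt5 (z : Fin 3 → ℂ) :
    ((![(starRingEnd ℂ) (z 0), -(starRingEnd ℂ) (z 1), (starRingEnd ℂ) (z 2)] = z) ∧
     (![z 0, z 1, -z 2] = z) ∧
     (∀ α : ℝ,
       ![Complex.exp (-(α : ℂ) * Complex.I) * ((Real.cos α : ℂ) * z 0 + (Real.sin α : ℂ) * z 1),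
         Complex.exp (-(α : ℂ) * Complex.I) * (-(Real.sin α : ℂ) * z 0 + (Real.cos α : ℂ) * z 1),
         Complex.exp (-(α : ℂ) * Complex.I) * z 2] = z))
    ↔ ∃ t : ℝ, z = fun j => (t : ℂ) * ![1, Complex.I, 0] j := by
  constructor
  · rintro ⟨h1, h2, h3⟩
    have hz2 : z 2 = 0 := by
      have h := congrFun h2 2
      simp at h
      linear_combination -h / 2
    have hre : (starRingEnd ℂ) (z 0) = z 0 := congrFun h1 0
    have hpi := congrFun (h3 (Real.pi / 2)) 0
    simp [Real.cos_pi_div_two, Real.sin_pi_div_two] at hpi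
    have hexp : Complex.exp (-(↑Real.pi / 2 * Complex.I)) = -Complex.I := by
      rw [show (-(↑Real.pi / 2 * Complex.I) : ℂ) = (↑(-(Real.pi/2)) : ℝ) * Complex.I by push_cast; ring]
      rw [Complex.exp_mul_I, ← Complex.ofReal_cos, ← Complex.ofReal_sin]
      simp
    rw [hexp] at hpi
    -- hpi : -I * z 1 = z 0
    have h0 : z 0 = ((z 0).re : ℂ) := (Complex.conj_eq_iff_re.mp hre).symm
    refine ⟨(z 0).re, ?_⟩
    funext j
    fin_cases j
    · simpa using h0
    · show z 1 = ((z 0).re : ℂ) * Complex.I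
      linear_combination Complex.I * hpi + Complex.I * h0 + z 1 * Complex.I_sq
    · simpa using hz2
  · rintro ⟨t, rfl⟩
    refine ⟨?_, ?_, ?_⟩
    · funext j; fin_cases j <;> simp [Complex.conj_I]
    · funext j; fin_cases j <;> simp
    · intro α
      have key : Complex.exp (-(α : ℂ) * Complex.I) *
          ((Real.cos α : ℂ) + (Real.sin α : ℂ) * Complex.I) = 1 := by
        rw [show ((Real.cos α : ℂ) + (Real.sin α : ℂ) * Complex.I) =
            Complex.exp ((α : ℂ) * Complex.I) by
          rw [Complex.exp_mul_I, Complex.ofReal_cos, Complex.ofReal_sin]]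
        rw [← Complex.exp_add]
        ring_nf
        exact Complex.exp_zero
      funext j
      fin_cases j
      · show Complex.exp (-(α : ℂ) * Complex.I) *
            ((Real.cos α : ℂ) * ((t : ℂ) * 1) + (Real.sin α : ℂ) * ((t : ℂ) * Complex.I))
            = (t : ℂ) * 1
        linear_combination (t : ℂ) * key
      · show Complex.exp (-(α : ℂ) * Complex.I) *
            (-(Real.sin α : ℂ) * ((t : ℂ) * 1) + (Real.cos α : ℂ) * ((t : ℂ) * Complex.I))
            = (t : ℂ) * Complex.I
        linear_combination (t : ℂ) * Complex.I * key -
          Complex.exp (-(α : ℂ) * Complex.I) * (t : ℂ) * (Real.sin α : ℂ) * Complex.I_sq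
      · show Complex.exp (-(α : ℂ) * Complex.I) * ((t : ℂ) * 0) = (t : ℂ) * 0
        simp
end

section
/- If z ∈ ℂ³ satisfies e^{iα} R₁₂(α) z = z for all α ∈ [0,2π) (i.e. e^{iα}(z₁cos α + z₂ sin α) = z₁, e^{iα}(-z₁ sin α + z₂ cos α) = z₂, e^{iα} z₃ = z₃ for all α), then z₂ = i z₁ and z₃ = 0. -/
/-- If `z ∈ ℂ³` is fixed by the combined gauge-rotation action, i.e.
`e^{iα} z₁ = z₁ cos α + z₂ sin α`, `e^{iα} z₂ = -z₁ sin α + z₂ cos α`,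
and `e^{iα} z₃ = z₃` for all `α`, then `z₂ = i z₁` and `z₃ = 0`. -/
theorem stmt6 (z : Fin 3 → ℂ)
    (h : ∀ α : ℝ,
      z 0 * (Real.cos α : ℂ) + z 1 * (Real.sin α : ℂ)
          = Complex.exp ((α : ℂ) * Complex.I) * z 0 ∧
      -(z 0) * (Real.sin α : ℂ) + z 1 * (Real.cos α : ℂ)
          = Complex.exp ((α : ℂ) * Complex.I) * z 1 ∧
      Complex.exp ((α : ℂ) * Complex.I) * z 2 = z 2) :
    z 1 = Complex.I * z 0 ∧ z 2 = 0 := by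
  obtain ⟨h1, -, -⟩ := h (Real.pi / 2)
  obtain ⟨-, -, h3⟩ := h Real.pi
  have e1 : Complex.exp ((↑(Real.pi / 2) : ℂ) * Complex.I) = Complex.I := by
    rw [Complex.exp_mul_I, ← Complex.ofReal_cos, ← Complex.ofReal_sin,
      Real.cos_pi_div_two, Real.sin_pi_div_two]
    simp
  have e2 : Complex.exp ((↑Real.pi : ℂ) * Complex.I) = -1 := Complex.exp_pi_mul_I
  rw [e1, Real.cos_pi_div_two, Real.sin_pi_div_two] at h1
  rw [e2] at h3
  constructor
  · simpa using h1
  · linear_combination -h3 / 2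
end

section
/- Let G₁' ⊕ {1, conj} ≤ O(3) ⊕ O(2), where G₁' consists of all block matrices diag(1, g) with g ∈ O(2), and let ι₀ = (diag(-1,1,1), -1). Then the fixed subspace of ℂ³ under the group generated by G₁' ⊕ {1, conj} and ι₀ is the real span of (1,0,0). -/
/-- The fixed subspace of `ℂ³` under (the subgroup of `O(3) ⊕ O(2)` generated
by) `G₁' ⊕ {1, conj}` (with `G₁'` the block matrices `diag(1, g)`, `g ∈ O(2)`)
and `ι₀ = (diag(-1,1,1), -1)` is the real span of `(1,0,0)`.  Fixedness is
expressed through the generators, whose fixed set coincides with that of the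
generated subgroup. -/
theorem stmt7 (z : Fin 3 → ℂ) :
    ((∀ A : Matrix (Fin 2) (Fin 2) ℝ, A ∈ Matrix.orthogonalGroup (Fin 2) ℝ →
        (A.map Complex.ofReal).mulVec ![z 1, z 2] = ![z 1, z 2]) ∧
     (∀ j, (starRingEnd ℂ) (z j) = z j) ∧
     (![z 0, -(z 1), -(z 2)] = z))
    ↔ ∃ t : ℝ, z = fun j => (t : ℂ) * ![1, 0, 0] j := by
  constructor
  · rintro ⟨_, hconj, hneg⟩
    have h1 : -(z 1) = z 1 := congrFun hneg 1
    have h2 : -(z 2) = z 2 := congrFun hneg 2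
    have hz1 : z 1 = 0 := by linear_combination -h1 / 2
    have hz2 : z 2 = 0 := by linear_combination -h2 / 2
    refine ⟨(z 0).re, funext fun j => ?_⟩
    have h0 := Complex.conj_eq_iff_re.mp (hconj 0)
    fin_cases j
    · simpa using h0.symm
    · simpa using hz1
    · simpa using hz2
  · rintro ⟨t, rfl⟩
    refine ⟨fun A hA => ?_, fun j => ?_, ?_⟩
    · have : (![((t:ℂ) * ![1,0,0] 1), ((t:ℂ) * ![1,0,0] 2)] : Fin 2 → ℂ) = 0 := by
        funext i; fin_cases i <;> simp
      rw [this, Matrix.mulVec_zero]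
    · fin_cases j <;> simp [Complex.conj_ofReal]
    · funext j; fin_cases j <;> simp
end

section
/- Let K be a self-adjoint operator on a complex Hilbert space, J skew-adjoint and bounded with J² = -Id, and H = JK. If u₁ satisfies H² u₁ = 0 and u₂ satisfies H u₂ = λ u₂ with λ ≠ 0, then ⟨J u₁, u₂⟩ = 0. -/
/-- Generalized-kernel symplectic orthogonality: if `K` is self-adjoint,
`J` skew-adjoint with `J² = -Id`, `H = JK`, `H² u₁ = 0` and `H u₂ = λ u₂`
with `λ ≠ 0`, then `⟨J u₁, u₂⟩ = 0`. -/
theorem stmt10 {E : Type*} [NormedAddCommGroup E] [InnerProductSpace ℂ E] [CompleteSpace E]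
    (K J : E →L[ℂ] E) (hK : IsSelfAdjoint K)
    (hJ : ContinuousLinearMap.adjoint J = -J)
    (hJ2 : J.comp J = -(ContinuousLinearMap.id ℂ E))
    (u₁ u₂ : E) (l : ℂ) (hl : l ≠ 0)
    (h₁ : (J.comp K) ((J.comp K) u₁) = 0) (h₂ : (J.comp K) u₂ = l • u₂) :
    (inner ℂ (J u₁) u₂ : ℂ) = 0 := by
  have hJJ : ∀ x : E, J (J x) = -x := by
    intro x
    have := congrArg (fun T : E →L[ℂ] E => T x) hJ2
    simpa using this
  have key : ∀ u v : E, (inner ℂ (J u) ((J.comp K) v) : ℂ) = inner ℂ (K u) v := by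
    intro u v
    have h1 : (inner ℂ (J u) (J (K v)) : ℂ)
        = inner ℂ (ContinuousLinearMap.adjoint J (J u)) (K v) :=
      (ContinuousLinearMap.adjoint_inner_left J (K v) (J u)).symm
    rw [show (J.comp K) v = J (K v) from rfl, h1, hJ]
    simp only [ContinuousLinearMap.neg_apply, hJJ, neg_neg]
    have h2 : (inner ℂ u (K v) : ℂ) = inner ℂ (K u) v := by
      conv_rhs => rw [← hK.adjoint_eq]
      exact (ContinuousLinearMap.adjoint_inner_left K v u).symm
    exact h2
  have e1 : (inner ℂ (K u₁) u₂ : ℂ) = l * inner ℂ (J u₁) u₂ := by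
    rw [← key u₁ u₂, h₂, inner_smul_right]
  have hKJK : K ((J.comp K) u₁) = 0 := by
    have := hJJ (K ((J.comp K) u₁))
    have h0 : J (K ((J.comp K) u₁)) = 0 := h₁
    rw [h0] at this
    simpa using this.symm
  have e2 : (0 : ℂ) = l * inner ℂ (J ((J.comp K) u₁)) u₂ := by
    have := key ((J.comp K) u₁) u₂
    rw [h₂, inner_smul_right, hKJK] at this
    simpa using this.symm
  have e3 : J ((J.comp K) u₁) = -(K u₁) := hJJ (K u₁)
  rw [e3, inner_neg_left, e1] at e2
  have : l * l * inner ℂ (J u₁) u₂ = 0 := by linear_combination e2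
  exact (mul_eq_zero.mp this).resolve_left (mul_ne_zero hl hl)
end

section
/- Let J be skew-adjoint with J² = -Id on a complex Hilbert space, K self-adjoint, H = JK. If H Φ = ω Φ with Re ω ≠ 0, then ⟨Φ, J Φ⟩ = 0 and consequently ⟨Φ, K Φ⟩ = 0. -/
/-- If `H = JK` (with `K` self-adjoint, `J` skew-adjoint, `J² = -Id`) has an
eigenvector `H Φ = ω Φ` with `Re ω ≠ 0` (i.e. `conj ω ≠ -ω`), then
`⟨Φ, JΦ⟩ = 0` and consequently `⟨Φ, KΦ⟩ = 0`. -/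
theorem stmt11 {E : Type*} [NormedAddCommGroup E] [InnerProductSpace ℂ E] [CompleteSpace E]
    (K J : E →L[ℂ] E) (hK : IsSelfAdjoint K)
    (hJ : ContinuousLinearMap.adjoint J = -J)
    (hJ2 : J.comp J = -(ContinuousLinearMap.id ℂ E))
    (Φ : E) (ω : ℂ) (h : (J.comp K) Φ = ω • Φ) (hω : ω.re ≠ 0) :
    (inner ℂ Φ (J Φ) : ℂ) = 0 ∧ (inner ℂ Φ (K Φ) : ℂ) = 0 := by
  set a : ℂ := inner ℂ Φ (J Φ) with ha
  have hKΦ : K Φ = -(ω • J Φ) := by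
    have h1 : J (J (K Φ)) = ω • J Φ := by
      have hh : J (K Φ) = ω • Φ := h
      rw [hh, map_smul]
    have h2 : J (J (K Φ)) = -(K Φ) := by
      have := congrArg (fun T : E →L[ℂ] E => T (K Φ)) hJ2
      simpa using this
    have : -(K Φ) = ω • J Φ := h2.symm.trans h1
    linear_combination (norm := abel) -this
  -- a is purely imaginary: conj a = -a
  have hskew : (starRingEnd ℂ) a = -a := by
    have : (inner ℂ (J Φ) Φ : ℂ) = inner ℂ Φ ((-J) Φ) := by
      rw [← hJ, ContinuousLinearMap.adjoint_inner_right]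
    have h1 : (inner ℂ (J Φ) Φ : ℂ) = -a := by
      simpa [ha, inner_neg_right] using this
    calc (starRingEnd ℂ) a = inner ℂ (J Φ) Φ := inner_conj_symm (J Φ) Φ
      _ = -a := h1
  -- inner ℂ Φ (K Φ) = -ω * a
  have hKa : (inner ℂ Φ (K Φ) : ℂ) = -(ω * a) := by
    rw [hKΦ, inner_neg_right, inner_smul_right]
  -- inner ℂ Φ (K Φ) is real (self-adjoint)
  have hreal : (starRingEnd ℂ) (inner ℂ Φ (K Φ) : ℂ) = inner ℂ Φ (K Φ) := by
    rw [inner_conj_symm, ← ContinuousLinearMap.adjoint_inner_right, hK.adjoint_eq]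
  have key : (ω + (starRingEnd ℂ) ω) * a = 0 := by
    have := hreal
    rw [hKa, map_neg, map_mul, hskew] at this
    ring_nf at this ⊢
    linear_combination this
  have hω2 : ω + (starRingEnd ℂ) ω ≠ 0 := by
    simp [Complex.ext_iff, Complex.add_re, Complex.conj_re]
    intro hre
    exact absurd (by linarith : ω.re = 0) hω
  have haz : a = 0 := by
    rcases mul_eq_zero.mp key with h' | h'
    · exact absurd h' hω2
    · exact h'
  exact ⟨haz, by rw [hKa, haz, mul_zero, neg_zero]⟩
end

section
/- Let J, K, H = JK be as above (J skew-adjoint with J² = -Id, K self-adjoint). If H Φ_a = ω_a Φ_a, H Φ_b = ω_b Φ_b and conj(ω_a) ≠ -ω_b, then ⟨Φ_a, J Φ_b⟩ = 0 and ⟨Φ_a, K Φ_b⟩ = 0. -/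
/-- Symplectic orthogonality of eigenvectors with non-conjugate-opposite
eigenvalues: if `H = JK` (with `K` self-adjoint, `J` skew-adjoint,
`J² = -Id`), `H Φₐ = ωₐ Φₐ`, `H Φᵦ = ωᵦ Φᵦ` and `conj ωₐ ≠ -ωᵦ`, then
`⟨Φₐ, JΦᵦ⟩ = 0` and `⟨Φₐ, KΦᵦ⟩ = 0`. -/
theorem stmt12 {E : Type*} [NormedAddCommGroup E] [InnerProductSpace ℂ E] [CompleteSpace E]
    (K J : E →L[ℂ] E) (hK : IsSelfAdjoint K)
    (hJ : ContinuousLinearMap.adjoint J = -J)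
    (hJ2 : J.comp J = -(ContinuousLinearMap.id ℂ E))
    (Φa Φb : E) (ωa ωb : ℂ)
    (ha : (J.comp K) Φa = ωa • Φa) (hb : (J.comp K) Φb = ωb • Φb)
    (hω : (starRingEnd ℂ) ωa ≠ -ωb) :
    (inner ℂ Φa (J Φb) : ℂ) = 0 ∧ (inner ℂ Φa (K Φb) : ℂ) = 0 := by
  have hJJ : ∀ x : E, J (J x) = -x := fun x => by
    have := congrArg (fun T : E →L[ℂ] E => T x) hJ2
    simpa using this
  have hKeig : ∀ (Φ : E) (ω : ℂ), (J.comp K) Φ = ω • Φ → K Φ = -(ω • J Φ) := by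
    intro Φ ω h
    have h1 : J (J (K Φ)) = ω • J Φ := by
      have : J ((J.comp K) Φ) = J (ω • Φ) := congrArg J h
      simpa [ContinuousLinearMap.comp_apply, map_smul] using this
    have h2 : J (J (K Φ)) = -(K Φ) := hJJ _
    rw [h2] at h1
    exact neg_eq_iff_eq_neg.mp h1
  have hKa := hKeig Φa ωa ha
  have hKb := hKeig Φb ωb hb
  set S : ℂ := inner ℂ Φa (J Φb) with hS
  -- Q = -ωb * S
  have hQ1 : (inner ℂ Φa (K Φb) : ℂ) = -ωb * S := by
    rw [hKb, inner_neg_right, inner_smul_right]; ring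
  -- Q = conj ωa * S
  have hQ2 : (inner ℂ Φa (K Φb) : ℂ) = (starRingEnd ℂ) ωa * S := by
    have hadj : ContinuousLinearMap.adjoint K = K :=
      ContinuousLinearMap.isSelfAdjoint_iff'.mp hK
    calc (inner ℂ Φa (K Φb) : ℂ) = inner ℂ (ContinuousLinearMap.adjoint K Φa) Φb := by
          rw [ContinuousLinearMap.adjoint_inner_left]
      _ = inner ℂ (K Φa) Φb := by rw [hadj]
      _ = inner ℂ (-(ωa • J Φa)) Φb := by rw [hKa]
      _ = -((starRingEnd ℂ) ωa * (inner ℂ (J Φa) Φb : ℂ)) := by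
          rw [inner_neg_left, inner_smul_left]
      _ = -((starRingEnd ℂ) ωa * (inner ℂ Φa (ContinuousLinearMap.adjoint J Φb) : ℂ)) := by
          rw [ContinuousLinearMap.adjoint_inner_right]
      _ = (starRingEnd ℂ) ωa * S := by
          rw [hJ]; simp [hS]
  have hfac : ((starRingEnd ℂ) ωa + ωb) * S = 0 := by
    have := hQ1.symm.trans hQ2
    linear_combination -this
  have hne : (starRingEnd ℂ) ωa + ωb ≠ 0 := by
    intro h; exact hω (by linear_combination h)
  have hS0 : S = 0 := by
    rcases mul_eq_zero.mp hfac with h | h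
    · exact absurd h hne
    · exact h
  exact ⟨hS0, by rw [hQ1, hS0]; ring⟩
end
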